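/- arXiv:1804.05263 — 2 statements merged into one kernel-verified Lean document; each statement's English description precedes it below -/
import Mathlib

section
/- ∫₀^∞ (1/t)·(1/t − 1/(2·sinh(t/2)))·e^{-t/2} dt = (1/2)·ln(π/e). -/
open Real Set MeasureTheory Filter Topology


noncomputable def binetG (u : ℝ) : ℝ := if u < 1/2 then 0 else (Int.fract u - 1/2)^2/2

lemma binetG_nonneg (u : ℝ) : 0 ≤ binetG u := by
  unfold binetG; split
  · exact le_refl 0
  · positivity

lemma binetG_le (u : ℝ) : binetG u ≤ 1/8 := by
  unfold binetG; split
  · norm_num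
  · have h1 : 0 ≤ Int.fract u := Int.fract_nonneg u
    have h2 : Int.fract u < 1 := Int.fract_lt_one u
    nlinarith [sq_nonneg (Int.fract u - 1/2), sq_nonneg (Int.fract u)]

lemma measurable_binetG : Measurable binetG := by
  unfold binetG
  exact Measurable.ite (measurableSet_lt measurable_id measurable_const) measurable_const
    (((measurable_fract.sub measurable_const).pow_const 2).div_const 2)

lemma binetG_eq_zero {u : ℝ} (hu : u ∈ Ioc (0:ℝ) (1/2)) : binetG u = 0 := by
  unfold binetG
  rcases lt_or_eq_of_le hu.2 with h | h
  · rw [if_pos h]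
  · rw [if_neg (by rw [h]; exact lt_irrefl _), h]
    rw [Int.fract_eq_self.2 ⟨by norm_num, by norm_num⟩]
    norm_num

lemma binetG_eq_one {u : ℝ} (hu : u ∈ Ioc (1/2 : ℝ) 1) : binetG u = (u - 1/2)^2/2 := by
  unfold binetG
  rw [if_neg (not_lt.2 hu.1.le)]
  rcases lt_or_eq_of_le hu.2 with h | h
  · rw [Int.fract_eq_self.2 ⟨by linarith [hu.1], h⟩]
  · subst h; rw [Int.fract_one]; norm_num

lemma binetG_eq_succ {n : ℕ} {u : ℝ} (hu : u ∈ Ioc ((n:ℝ)+1) ((n:ℝ)+2)) :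
    binetG u = (u - ((n:ℝ) + 3/2))^2/2 := by
  unfold binetG
  rw [if_neg (by push_neg; linarith [hu.1])]
  rcases lt_or_eq_of_le hu.2 with h | h
  · have : Int.fract u = u - ((n:ℝ)+1) := by
      have : Int.fract (u - ((n:ℝ)+1)) = u - ((n:ℝ)+1) :=
        Int.fract_eq_self.2 ⟨by linarith [hu.1], by linarith⟩
      have h2 : Int.fract (u - ((n:ℝ)+1)) = Int.fract u := by
        have : ((n:ℝ)+1) = ((n+1 : ℤ) : ℝ) := by push_cast; ring
        rw [this, Int.fract_sub_intCast]
      rw [← h2, this]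
    rw [this]; ring
  · subst h
    rw [show ((n:ℝ)+2) = ((n+2 : ℤ) : ℝ) by push_cast; ring, Int.fract_intCast]
    push_cast; ring


lemma hasDerivAt_blockA (t c : ℝ) (ht : t ≠ 0) (u : ℝ) :
    HasDerivAt (fun u => -Real.exp (-(t*u)) * ((u-c)^2/(2*t) + (u-c)/t^2 + 1/t^3))
      (Real.exp (-(t*u)) * ((u-c)^2/2)) u := by
  have h1 : HasDerivAt (fun u : ℝ => -(t*u)) (-t) u := by
    exact (((hasDerivAt_id u).const_mul t).neg).congr_deriv (by ring)
  have hexp : HasDerivAt (fun u : ℝ => Real.exp (-(t*u))) (Real.exp (-(t*u)) * (-t)) u :=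
    h1.exp
  have hpoly : HasDerivAt (fun u : ℝ => (u-c)^2/(2*t) + (u-c)/t^2 + 1/t^3)
      ((2*(u-c))/(2*t) + 1/t^2) u := by
    have h2 : HasDerivAt (fun u : ℝ => u - c) 1 u := (hasDerivAt_id u).sub_const c
    have h3 := (h2.pow 2).div_const (2*t)
    have h4 := h2.div_const (t^2)
    have := (h3.add h4).add_const (1/t^3)
    exact this.congr_deriv (by norm_num)
  have := (hexp.neg).mul hpoly
  refine this.congr_deriv ?_
  simp only [Pi.neg_apply]
  field_simp
  ring

lemma integral_blockA (t c a b : ℝ) (ht : 0 < t) (hab : a ≤ b) :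
    ∫ u in Ioc a b, Real.exp (-(t*u)) * ((u-c)^2/2)
      = (Real.exp (-(t*a)) * ((a-c)^2/(2*t) + (a-c)/t^2 + 1/t^3))
        - Real.exp (-(t*b)) * ((b-c)^2/(2*t) + (b-c)/t^2 + 1/t^3) := by
  rw [← intervalIntegral.integral_of_le hab,
    intervalIntegral.integral_eq_sub_of_hasDerivAt
      (fun x _ => hasDerivAt_blockA t c ht.ne' x)
      (Continuous.intervalIntegrable (by continuity) a b)]
  ring

lemma hasDerivAt_blockB (c : ℝ) {u : ℝ} (hu : 0 < u) :
    HasDerivAt (fun u => u/2 - c * Real.log u - c^2/2 * u⁻¹) ((u-c)^2/(2*u^2)) u := by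
  have h1 := (hasDerivAt_id u).div_const 2
  have h2 := (Real.hasDerivAt_log hu.ne').const_mul c
  have h3 := (hasDerivAt_inv hu.ne').const_mul (c^2/2)
  have := (h1.sub h2).sub h3
  refine this.congr_deriv ?_
  field_simp
  ring

lemma integral_blockB (c a b : ℝ) (ha : 0 < a) (hab : a ≤ b) :
    ∫ u in Ioc a b, (u-c)^2/(2*u^2)
      = (b/2 - c*Real.log b - c^2/2 * b⁻¹) - (a/2 - c*Real.log a - c^2/2 * a⁻¹) := by
  rw [← intervalIntegral.integral_of_le hab,
    intervalIntegral.integral_eq_sub_of_hasDerivAt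
      (fun x hx => hasDerivAt_blockB c (lt_of_lt_of_le ha (by
        rw [uIcc_of_le hab] at hx; exact hx.1)))
      (ContinuousOn.intervalIntegrable (by
        apply ContinuousOn.div (by fun_prop) (by fun_prop)
        intro x hx
        rw [uIcc_of_le hab] at hx
        have : 0 < x := lt_of_lt_of_le ha hx.1
        positivity))]


lemma iUnion_Ioc_nat_real : (⋃ n : ℕ, Ioc ((n:ℝ)) ((n:ℝ)+1)) = Ioi (0:ℝ) := by
  ext x
  simp only [mem_iUnion, mem_Ioc, mem_Ioi]
  constructor
  · rintro ⟨n, h1, _⟩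
    exact lt_of_le_of_lt (Nat.cast_nonneg n) h1
  · intro hx
    refine ⟨⌈x⌉₊ - 1, ?_, ?_⟩
    · have h1 : (⌈x⌉₊ : ℝ) < x + 1 := Nat.ceil_lt_add_one hx.le
      have h2 : 1 ≤ ⌈x⌉₊ := Nat.one_le_ceil_iff.2 hx
      rw [Nat.cast_sub h2]
      push_cast
      linarith
    · have h2 : 1 ≤ ⌈x⌉₊ := Nat.one_le_ceil_iff.2 hx
      rw [Nat.cast_sub h2]
      push_cast
      linarith [Nat.le_ceil x]

lemma pairwise_disjoint_Ioc_nat_real :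
    Pairwise (Function.onFun Disjoint fun n : ℕ => Ioc ((n:ℝ)) ((n:ℝ)+1)) := by
  intro m n hmn
  refine Set.Ioc_disjoint_Ioc.2 ?_
  rcases lt_or_gt_of_ne hmn with h | h
  · exact le_trans inf_le_left (le_trans (by exact_mod_cast h) le_sup_right)
  · exact le_trans inf_le_right (le_trans (by exact_mod_cast h) le_sup_left)

lemma hasSum_integral_Ioi_nat (f : ℝ → ℝ) (hf : IntegrableOn f (Ioi (0:ℝ))) :
    HasSum (fun n : ℕ => ∫ u in Ioc ((n:ℝ)) ((n:ℝ)+1), f u) (∫ u in Ioi (0:ℝ), f u) := by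
  have := MeasureTheory.hasSum_integral_iUnion (f := f) (μ := volume)
    (s := fun n : ℕ => Ioc ((n:ℝ)) ((n:ℝ)+1)) (fun n => measurableSet_Ioc)
    pairwise_disjoint_Ioc_nat_real (by rwa [iUnion_Ioc_nat_real])
  rwa [iUnion_Ioc_nat_real] at this

lemma hasDerivAt_texp (u : ℝ) (hu : u ≠ 0) (t : ℝ) :
    HasDerivAt (fun t => -Real.exp (-(t*u)) * (t/u + 1/u^2)) (t * Real.exp (-(t*u))) t := by
  have h1 : HasDerivAt (fun t : ℝ => -(t*u)) (-u) t := by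
    exact (((hasDerivAt_id t).mul_const u).neg).congr_deriv (by ring)
  have hexp := h1.exp
  have hpoly : HasDerivAt (fun t : ℝ => t/u + 1/u^2) (1/u) t := by
    have := ((hasDerivAt_id t).div_const u).add_const (1/u^2)
    exact this
  have := (hexp.neg).mul hpoly
  refine this.congr_deriv ?_
  simp only [Pi.neg_apply]
  field_simp
  ring

lemma tendsto_texp_antideriv (u : ℝ) (hu : 0 < u) :
    Tendsto (fun t => -Real.exp (-(t*u)) * (t/u + 1/u^2)) atTop (𝓝 0) := by
  have h1 : Tendsto (fun t : ℝ => t * Real.exp (-(u*t))) atTop (𝓝 0) := by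
    have := tendsto_rpow_mul_exp_neg_mul_atTop_nhds_zero 1 u hu
    refine this.congr' ?_
    filter_upwards [eventually_gt_atTop (0:ℝ)] with x hx
    rw [Real.rpow_one, neg_mul]
  have h2 : Tendsto (fun t : ℝ => Real.exp (-(u*t))) atTop (𝓝 0) := by
    have hmul : Tendsto (fun t : ℝ => u * t) atTop atTop := tendsto_id.const_mul_atTop hu
    have := Real.tendsto_exp_neg_atTop_nhds_zero.comp hmul
    exact this
  have : Tendsto (fun t : ℝ => -((1/u) * (t * Real.exp (-(u*t))) + (1/u^2) * Real.exp (-(u*t))))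
      atTop (𝓝 (-((1/u) * 0 + (1/u^2) * 0))) :=
    (((h1.const_mul (1/u)).add (h2.const_mul (1/u^2)))).neg
  simp only [mul_zero, add_zero, neg_zero] at this
  refine this.congr fun t => by rw [mul_comm t u]; field_simp

lemma integrableOn_texp (u : ℝ) (hu : 0 < u) :
    IntegrableOn (fun t => t * Real.exp (-(t*u))) (Ioi (0:ℝ)) :=
  integrableOn_Ioi_deriv_of_nonneg' (fun t _ => hasDerivAt_texp u hu.ne' t)
    (fun t ht => mul_nonneg (le_of_lt ht) (Real.exp_pos _).le) (tendsto_texp_antideriv u hu)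

lemma integral_texp (u : ℝ) (hu : 0 < u) :
    ∫ t in Ioi (0:ℝ), t * Real.exp (-(t*u)) = 1/u^2 := by
  rw [integral_Ioi_of_hasDerivAt_of_tendsto' (fun t _ => hasDerivAt_texp u hu.ne' t)
    (integrableOn_texp u hu) (tendsto_texp_antideriv u hu)]
  norm_num

lemma integrableOn_L1 (t : ℝ) (ht : 0 < t) :
    IntegrableOn (fun u => t * binetG u * Real.exp (-(t*u))) (Ioi (0:ℝ)) := by
  have hdom : IntegrableOn (fun u => (t/8) * Real.exp (-t*u)) (Ioi (0:ℝ)) :=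
    (exp_neg_integrableOn_Ioi 0 ht).const_mul (t/8)
  refine Integrable.mono hdom ?_ ?_
  · exact ((measurable_const.mul (measurable_binetG)).mul
      ((measurable_const.mul measurable_id).neg.exp)).aestronglyMeasurable
  · refine Filter.Eventually.of_forall fun u => ?_
    have h1 : 0 ≤ binetG u := binetG_nonneg u
    have h2 : binetG u ≤ 1/8 := binetG_le u
    have h3 : (0:ℝ) < Real.exp (-t*u) := Real.exp_pos _
    rw [Real.norm_eq_abs, Real.norm_eq_abs, neg_mul]
    rw [abs_of_nonneg (by positivity), abs_of_nonneg (by positivity)]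
    calc t * binetG u * Real.exp (-(t*u)) ≤ t * (1/8) * Real.exp (-(t*u)) := by
          apply mul_le_mul_of_nonneg_right _ (Real.exp_pos _).le
          exact mul_le_mul_of_nonneg_left h2 ht.le
      _ = t/8 * Real.exp (-(t*u)) := by ring

set_option maxHeartbeats 1000000 in
lemma binet_L1 (t : ℝ) (ht : 0 < t) :
    ∫ u in Ioi (0:ℝ), t * binetG u * Real.exp (-(t*u))
      = (1/t) * (1/t - 1/(2 * Real.sinh (t/2))) * Real.exp (-t/2) := by
  have ht' : t ≠ 0 := ht.ne'
  set z := Real.exp (-(t/2)) with hz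
  have hz0 : 0 < z := Real.exp_pos _
  have hz1 : z < 1 := by
    rw [hz, Real.exp_lt_one_iff]; linarith
  have hzpow : ∀ m : ℕ, z^m = Real.exp (-(t/2) * m) := fun m => by
    rw [hz, ← Real.exp_nat_mul]; congr 1; ring
  have hz2 : Real.exp (-(t*1)) = z^2 := by rw [hzpow]; congr 1; push_cast; ring
  have hza : Real.exp (-(t*(1/2))) = z := by rw [hz]; congr 1; ring
  set Q := ((1:ℝ)/8 + 1/(2*t) + 1/t^2) with hQ
  set P := ((1:ℝ)/8 - 1/(2*t) + 1/t^2) with hP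
  set K := z^2 * P - z^4 * Q with hK
  set f : ℝ → ℝ := fun u => t * binetG u * Real.exp (-(t*u)) with hf
  set w : ℕ → ℝ := fun n => ∫ u in Ioc ((n:ℝ)) ((n:ℝ)+1), f u with hw
  have hsum : HasSum w (∫ u in Ioi (0:ℝ), f u) :=
    hasSum_integral_Ioi_nat f (integrableOn_L1 t ht)
  -- w 0
  have w0 : w 0 = z/t^2 - z^2 * Q := by
    have hsplit : Ioc (0:ℝ) 1 = Ioc (0:ℝ) (1/2) ∪ Ioc (1/2 : ℝ) 1 :=
      (Ioc_union_Ioc_eq_Ioc (by norm_num) (by norm_num)).symm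
    have hIf : IntegrableOn f (Ioi (0:ℝ)) := integrableOn_L1 t ht
    have h1 : ∫ u in Ioc (0:ℝ) (1/2), f u = 0 := by
      have heq : EqOn f (fun _ => (0:ℝ)) (Ioc (0:ℝ) (1/2)) := fun u hu => by
        rw [hf]; simp [binetG_eq_zero hu]
      rw [MeasureTheory.setIntegral_congr_fun measurableSet_Ioc heq, integral_zero]
    have h2 : ∫ u in Ioc (1/2 : ℝ) 1, f u
        = t * ∫ u in Ioc (1/2 : ℝ) 1, Real.exp (-(t*u)) * ((u-1/2)^2/2) := by
      rw [← MeasureTheory.integral_const_mul]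
      refine MeasureTheory.setIntegral_congr_fun measurableSet_Ioc fun u hu => ?_
      simp only [hf]; rw [binetG_eq_one hu]; ring
    have hw0 : w 0 = ∫ u in Ioc (0:ℝ) 1, f u := by
      rw [hw]; norm_num
    rw [hw0, hsplit, MeasureTheory.setIntegral_union (Set.Ioc_disjoint_Ioc_of_le le_rfl)
      measurableSet_Ioc
      (hIf.mono_set (fun x hx => hx.1))
      (hIf.mono_set (fun x hx => lt_trans (by norm_num) hx.1)),
      h1, h2, integral_blockA t (1/2) (1/2) 1 ht (by norm_num), hza, hz2]
    rw [hQ]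
    field_simp
    ring
  -- w (n+1)
  have wn : ∀ n : ℕ, w (n+1) = (z^2)^n * K := by
    intro n
    have hlo : ((n+1 : ℕ) : ℝ) = (n:ℝ)+1 := by push_cast; ring
    have hcongr : w (n+1) = ∫ u in Ioc ((n:ℝ)+1) ((n:ℝ)+2),
        t * (Real.exp (-(t*u)) * ((u - ((n:ℝ)+3/2))^2/2)) := by
      rw [hw]
      simp only [hlo]
      rw [show (n:ℝ)+1+1 = (n:ℝ)+2 by ring]
      refine MeasureTheory.setIntegral_congr_fun measurableSet_Ioc fun u hu => ?_
      simp only [hf]; rw [binetG_eq_succ hu]; ring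
    have he1 : Real.exp (-(t*((n:ℝ)+1))) = (z^2)^n * z^2 := by
      rw [← pow_mul, ← pow_add, hzpow]; congr 1; push_cast; ring
    have he2 : Real.exp (-(t*((n:ℝ)+2))) = (z^2)^n * z^4 := by
      rw [← pow_mul, ← pow_add, hzpow]; congr 1; push_cast; ring
    rw [hcongr, MeasureTheory.integral_const_mul,
      integral_blockA t ((n:ℝ)+3/2) ((n:ℝ)+1) ((n:ℝ)+2) ht (by linarith), he1, he2,
      hK, hP, hQ]
    have h8 : ((n:ℝ)+1-((n:ℝ)+3/2)) = -(1/2 : ℝ) := by ring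
    have h9 : ((n:ℝ)+2-((n:ℝ)+3/2)) = (1/2 : ℝ) := by ring
    rw [h8, h9]
    field_simp
    ring
  -- geometric sum
  have hgeo : HasSum (fun n : ℕ => (z^2)^n * K) ((1-z^2)⁻¹ * K) :=
    (hasSum_geometric_of_lt_one (by positivity) (by nlinarith)).mul_right K
  have hshift : HasSum (fun n : ℕ => w (n+1)) ((1-z^2)⁻¹ * K) := by
    refine hgeo.congr_fun fun n => wn n
  have htot : HasSum w ((1-z^2)⁻¹ * K + w 0) := by
    have := (hasSum_nat_add_iff (f := w) 1).1 (by simpa using hshift)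
    simpa using this
  have hval : ∫ u in Ioi (0:ℝ), f u = (1-z^2)⁻¹ * K + w 0 := hsum.unique htot
  rw [hf] at hval
  rw [hval, w0]
  -- final algebra
  have hzinv : Real.exp (t/2) = z⁻¹ := by
    rw [hz, ← Real.exp_neg, neg_neg]
  have hsinh : 2 * Real.sinh (t/2) = z⁻¹ - z := by
    rw [Real.sinh_eq, hzinv, hz]
    ring
  have hexp : Real.exp (-t/2) = z := by rw [hz]; congr 1; ring
  rw [hsinh, hexp, hK, hP, hQ]
  have h1z : (1:ℝ) - z^2 ≠ 0 := by nlinarith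
  have hzz : z⁻¹ - z ≠ 0 := by
    have : z⁻¹ > 1 := (one_lt_inv₀ hz0).2 hz1
    intro h
    have : z⁻¹ = z := by linarith [sub_eq_zero.1 h]
    nlinarith
  have hinv : (1 - z^2) * (1 - z^2)⁻¹ = 1 := mul_inv_cancel₀ h1z
  field_simp [h1z, hzz]
  ring

lemma binetG_zero' (u : ℝ) (h : u < 1/2) : binetG u = 0 := by
  unfold binetG; rw [if_pos h]

lemma integrableOn_Gu2 : IntegrableOn (fun u => binetG u / u^2) (Ioi (0:ℝ)) := by
  have hbase : IntegrableOn (fun u : ℝ => (1/8) / u^2) (Ioi (1/4 : ℝ)) := by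
    refine integrableOn_Ioi_deriv_of_nonneg' (l := (0:ℝ)) (g := fun u => -(1/8) * u⁻¹) ?_ ?_ ?_
    · intro x hx
      have hx0 : x ≠ 0 := by
        have h4 : (0:ℝ) < 1/4 := by norm_num
        exact (lt_of_lt_of_le h4 hx).ne'
      have := (hasDerivAt_inv hx0).const_mul (-(1/8) : ℝ)
      refine this.congr_deriv ?_
      ring
    · intro x _
      positivity
    · have h1 : Tendsto (fun u : ℝ => u⁻¹) atTop (𝓝 0) := tendsto_inv_atTop_zero
      have := h1.const_mul (-(1/8) : ℝ)
      simpa using this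
  have hdom : Integrable ((Ioi (1/4:ℝ)).indicator (fun u : ℝ => (1/8) / u^2)) volume :=
    (integrable_indicator_iff measurableSet_Ioi).2 hbase
  refine Integrable.mono hdom.integrableOn ?_ ?_
  · exact (measurable_binetG.div (measurable_id.pow_const 2)).aestronglyMeasurable
  · refine Filter.Eventually.of_forall fun u => ?_
    rw [Real.norm_eq_abs, Real.norm_eq_abs]
    rcases le_or_gt u (1/4 : ℝ) with h | h
    · have h0 : binetG u = 0 := binetG_zero' u (by linarith)
      simp [h0, abs_nonneg]
    · rw [Set.indicator_of_mem (by exact h : u ∈ Ioi (1/4:ℝ))]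
      have hu2 : (0:ℝ) < u^2 := by positivity
      rw [abs_of_nonneg (div_nonneg (binetG_nonneg u) hu2.le), abs_of_nonneg (by positivity)]
      gcongr
      exact binetG_le u

lemma binet_swap :
    ∫ t in Ioi (0:ℝ), ∫ u in Ioi (0:ℝ), t * binetG u * Real.exp (-(t*u))
      = ∫ u in Ioi (0:ℝ), binetG u / u^2 := by
  set μ := volume.restrict (Ioi (0:ℝ)) with hμ
  have hmeas : Measurable (Function.uncurry fun t u : ℝ => t * binetG u * Real.exp (-(t*u))) := by
    apply Measurable.mul
    · exact measurable_fst.mul (measurable_binetG.comp measurable_snd)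
    · exact ((measurable_fst.mul measurable_snd).neg).exp
  have hslice : ∀ u : ℝ, 0 < u →
      Integrable (fun t => t * binetG u * Real.exp (-(t*u))) μ := by
    intro u hu
    have := (integrableOn_texp u hu).const_mul (binetG u)
    refine this.congr (Filter.Eventually.of_forall fun t => by ring)
  have hnorm : ∀ u : ℝ, 0 < u →
      (∫ t, ‖t * binetG u * Real.exp (-(t*u))‖ ∂μ) = binetG u / u^2 := by
    intro u hu
    have h1 : (∫ t, ‖t * binetG u * Real.exp (-(t*u))‖ ∂μ)
        = ∫ t in Ioi (0:ℝ), t * binetG u * Real.exp (-(t*u)) := by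
      rw [hμ]
      refine MeasureTheory.setIntegral_congr_fun measurableSet_Ioi fun t ht => ?_
      rw [Real.norm_eq_abs, abs_of_nonneg]
      have : (0:ℝ) < t := ht
      have := binetG_nonneg u
      positivity
    rw [h1]
    have h2 : ∫ t in Ioi (0:ℝ), t * binetG u * Real.exp (-(t*u))
        = binetG u * ∫ t in Ioi (0:ℝ), t * Real.exp (-(t*u)) := by
      rw [← MeasureTheory.integral_const_mul]
      refine MeasureTheory.setIntegral_congr_fun measurableSet_Ioi fun t _ => by ring
    rw [h2, integral_texp u hu]
    ring
  have hint : Integrable (Function.uncurry fun t u : ℝ => t * binetG u * Real.exp (-(t*u)))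
      (μ.prod μ) := by
    refine (integrable_prod_iff' (hmeas.aestronglyMeasurable)).2 ⟨?_, ?_⟩
    · rw [hμ]
      refine (ae_restrict_iff' measurableSet_Ioi).2 (Filter.Eventually.of_forall fun u hu => ?_)
      exact hslice u hu
    · refine Integrable.congr (f := fun u => binetG u / u^2) ?_ ?_
      · exact integrableOn_Gu2
      · rw [hμ]
        refine (ae_restrict_iff' measurableSet_Ioi).2 (Filter.Eventually.of_forall fun u hu => ?_)
        exact (hnorm u hu).symm
  have hswap := MeasureTheory.integral_integral_swap hint
  rw [hμ] at hswap
  rw [hswap]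
  refine MeasureTheory.setIntegral_congr_fun measurableSet_Ioi fun u hu => ?_
  have h2 : ∫ t in Ioi (0:ℝ), t * binetG u * Real.exp (-(t*u))
      = binetG u * ∫ t in Ioi (0:ℝ), t * Real.exp (-(t*u)) := by
    rw [← MeasureTheory.integral_const_mul]
    refine MeasureTheory.setIntegral_congr_fun measurableSet_Ioi fun t _ => by ring
  rw [h2, integral_texp u hu]
  ring

lemma stirling_limit : Tendsto (fun n : ℕ => Real.log (Nat.factorial n) - ((n:ℝ)+1/2)*Real.log n + n)
    atTop (𝓝 (1/2 * Real.log (2*Real.pi))) := by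
  have hπ : (0:ℝ) < Real.sqrt Real.pi := Real.sqrt_pos.2 Real.pi_pos
  have h1 : Tendsto (fun n => Real.log (Stirling.stirlingSeq n)) atTop
      (𝓝 (Real.log (Real.sqrt Real.pi))) :=
    (Stirling.tendsto_stirlingSeq_sqrt_pi).log hπ.ne'
  have h2 : Tendsto (fun n => Real.log (Stirling.stirlingSeq n) + 1/2 * Real.log 2) atTop
      (𝓝 (Real.log (Real.sqrt Real.pi) + 1/2 * Real.log 2)) := h1.add_const _
  have hval : Real.log (Real.sqrt Real.pi) + 1/2 * Real.log 2 = 1/2 * Real.log (2*Real.pi) := by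
    rw [Real.log_sqrt Real.pi_pos.le, Real.log_mul two_ne_zero Real.pi_ne_zero]
    ring
  rw [hval] at h2
  refine h2.congr' ?_
  filter_upwards [eventually_ge_atTop 1] with n hn
  have hn0 : (0:ℝ) < (n:ℝ) := by exact_mod_cast hn
  rw [Stirling.log_stirlingSeq_formula, Real.log_mul two_ne_zero hn0.ne',
    Real.log_div hn0.ne' (Real.exp_ne_zero 1), Real.log_exp]
  ring

lemma tendsto_inv_nat_succ : Tendsto (fun N : ℕ => 1/(8*((N:ℝ)+1))) atTop (𝓝 0) := by
  have h1 : Tendsto (fun N : ℕ => 8*((N:ℝ)+1)) atTop atTop := by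
    apply Filter.Tendsto.const_mul_atTop (by norm_num : (0:ℝ) < 8)
    exact tendsto_atTop_add_const_right _ _ tendsto_natCast_atTop_atTop
  have := h1.inv_tendsto_atTop
  refine this.congr fun N => ?_
  simp [one_div]

lemma binet_L3 : ∫ u in Ioi (0:ℝ), binetG u / u^2 = 1/2 * Real.log Real.pi - 1/2 := by
  set g : ℝ → ℝ := fun u => binetG u / u^2 with hg
  set w : ℕ → ℝ := fun n => ∫ u in Ioc ((n:ℝ)) ((n:ℝ)+1), g u with hw
  have hsum : HasSum w (∫ u in Ioi (0:ℝ), g u) :=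
    hasSum_integral_Ioi_nat g integrableOn_Gu2
  have hIf : IntegrableOn g (Ioi (0:ℝ)) := integrableOn_Gu2
  -- w 0
  have w0 : w 0 = 3/8 - 1/2 * Real.log 2 := by
    have hsplit : Ioc (0:ℝ) 1 = Ioc (0:ℝ) (1/2) ∪ Ioc (1/2 : ℝ) 1 :=
      (Ioc_union_Ioc_eq_Ioc (by norm_num) (by norm_num)).symm
    have h1 : ∫ u in Ioc (0:ℝ) (1/2), g u = 0 := by
      have heq : EqOn g (fun _ => (0:ℝ)) (Ioc (0:ℝ) (1/2)) := fun u hu => by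
        simp only [hg]; rw [binetG_eq_zero hu]; simp
      rw [MeasureTheory.setIntegral_congr_fun measurableSet_Ioc heq, integral_zero]
    have h2 : ∫ u in Ioc (1/2 : ℝ) 1, g u
        = ∫ u in Ioc (1/2 : ℝ) 1, (u - 1/2)^2/(2*u^2) := by
      refine MeasureTheory.setIntegral_congr_fun measurableSet_Ioc fun u hu => ?_
      simp only [hg]; rw [binetG_eq_one hu]; ring
    have hw0 : w 0 = ∫ u in Ioc (0:ℝ) 1, g u := by
      rw [hw]; norm_num
    rw [hw0, hsplit, MeasureTheory.setIntegral_union (Set.Ioc_disjoint_Ioc_of_le le_rfl)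
      measurableSet_Ioc
      (hIf.mono_set (fun x hx => hx.1))
      (hIf.mono_set (fun x hx => lt_trans (by norm_num) hx.1)),
      h1, h2, integral_blockB (1/2) (1/2) 1 (by norm_num) (by norm_num)]
    have hlog : Real.log (1/2 : ℝ) = -Real.log 2 := by
      rw [one_div, Real.log_inv]
    rw [Real.log_one, hlog]
    norm_num
  -- w (n+1)
  have wn : ∀ n : ℕ, w (n+1)
      = 1 + 1/(8*((n:ℝ)+1)*((n:ℝ)+2))
        - ((n:ℝ)+3/2)*(Real.log ((n:ℝ)+2) - Real.log ((n:ℝ)+1)) := by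
    intro n
    have hn1 : (0:ℝ) < (n:ℝ)+1 := by positivity
    have hn2 : (0:ℝ) < (n:ℝ)+2 := by positivity
    have hlo : ((n+1 : ℕ) : ℝ) = (n:ℝ)+1 := by push_cast; ring
    have hcongr : w (n+1) = ∫ u in Ioc ((n:ℝ)+1) ((n:ℝ)+2),
        (u - ((n:ℝ)+3/2))^2/(2*u^2) := by
      rw [hw]
      simp only [hlo]
      rw [show (n:ℝ)+1+1 = (n:ℝ)+2 by ring]
      refine MeasureTheory.setIntegral_congr_fun measurableSet_Ioc fun u hu => ?_
      simp only [hg]; rw [binetG_eq_succ hu]; ring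
    rw [hcongr, integral_blockB ((n:ℝ)+3/2) ((n:ℝ)+1) ((n:ℝ)+2) hn1 (by linarith)]
    field_simp
    ring
  -- partial sums
  have hps : ∀ N : ℕ, ∑ i ∈ Finset.range (N+1), w i
      = 3/8 - 1/2*Real.log 2 + N + 1/8 - 1/(8*((N:ℝ)+1))
        - ((N:ℝ)+3/2) * Real.log ((N:ℝ)+1) + Real.log (Nat.factorial (N+1)) := by
    intro N
    induction N with
    | zero =>
      rw [Finset.sum_range_one, w0]
      norm_num [Nat.factorial, Real.log_one]
    | succ N ih =>
      rw [Finset.sum_range_succ, ih, wn N]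
      have hfac : Real.log (Nat.factorial (N+2)) = Real.log ((N:ℝ)+2) + Real.log (Nat.factorial (N+1)) := by
        have : (Nat.factorial (N+2) : ℝ) = ((N:ℝ)+2) * (Nat.factorial (N+1) : ℝ) := by
          rw [show N+2 = (N+1)+1 from rfl, Nat.factorial_succ]
          push_cast
          ring
        rw [this, Real.log_mul (by positivity) (by
          exact_mod_cast Nat.cast_ne_zero.2 (Nat.factorial_ne_zero (N+1)))]
      push_cast
      rw [hfac]
      have hN1 : ((N:ℝ)+1) ≠ 0 := by positivity
      have hN2 : ((N:ℝ)+2) ≠ 0 := by positivity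
      field_simp
      ring
  -- limit of partial sums
  have hlim : Tendsto (fun N : ℕ => ∑ i ∈ Finset.range (N+1), w i) atTop
      (𝓝 (1/2 * Real.log Real.pi - 1/2)) := by
    have hS : Tendsto (fun N : ℕ => Real.log (Nat.factorial (N+1))
        - (((N+1:ℕ):ℝ)+1/2)*Real.log ((N+1:ℕ):ℝ) + ((N+1:ℕ):ℝ)) atTop
        (𝓝 (1/2 * Real.log (2*Real.pi))) := by
      exact stirling_limit.comp (tendsto_add_atTop_nat 1)
    have hcomb := (hS.sub tendsto_inv_nat_succ).add_const (3/8 - 1/2*Real.log 2 + 1/8 - 1)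
    rw [sub_zero] at hcomb
    have hval : 1/2 * Real.log (2*Real.pi) + (3/8 - 1/2*Real.log 2 + 1/8 - 1)
        = 1/2 * Real.log Real.pi - 1/2 := by
      rw [Real.log_mul two_ne_zero Real.pi_ne_zero]
      ring
    rw [hval] at hcomb
    refine hcomb.congr fun N => ?_
    rw [hps N]
    push_cast
    ring
  have := hsum.tendsto_sum_nat
  have h2 : Tendsto (fun N : ℕ => ∑ i ∈ Finset.range (N+1), w i) atTop
      (𝓝 (∫ u in Ioi (0:ℝ), g u)) := this.comp (tendsto_add_atTop_nat 1)
  exact tendsto_nhds_unique h2 hlim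

theorem binet_integral_at_half :
    ∫ t in Ioi (0:ℝ), (1/t) * (1/t - 1/(2 * Real.sinh (t/2))) * Real.exp (-t/2)
      = (1/2) * Real.log (Real.pi / Real.exp 1) := by
  have h1 : ∫ t in Ioi (0:ℝ), (1/t) * (1/t - 1/(2 * Real.sinh (t/2))) * Real.exp (-t/2)
      = ∫ t in Ioi (0:ℝ), ∫ u in Ioi (0:ℝ), t * binetG u * Real.exp (-(t*u)) := by
    refine MeasureTheory.setIntegral_congr_fun measurableSet_Ioi fun t ht => ?_
    exact (binet_L1 t ht).symm
  rw [h1, binet_swap, binet_L3, Real.log_div Real.pi_ne_zero (Real.exp_ne_zero 1),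
    Real.log_exp]
  ring
end

section
/- Watson's lemma (first-order form): Let f : [0,∞) → ℝ be continuous with |f(t)| ≤ K·e^{ct} for some constants K, c > 0, and suppose f(t) = a₀·t^α + o(t^α) as t → 0⁺ where α > -1. Then ∫₀^∞ f(t)·e^{-xt} dt = a₀·Γ(α+1)/x^{α+1} + o(1/x^{α+1}) as x → ∞. -/
open Real Set Filter Asymptotics MeasureTheory

lemma aux_int_rpow {α : ℝ} (hα : -1 < α) {x : ℝ} (hx : 0 < x) :
    IntegrableOn (fun t : ℝ => t ^ α * Real.exp (-x * t)) (Ioi 0) := by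
  have h := integrableOn_rpow_mul_exp_neg_mul_rpow (p := 1) hα one_pos hx
  refine h.congr_fun (fun t _ => ?_) measurableSet_Ioi
  simp only [Real.rpow_one]

lemma aux_int_val {α : ℝ} (hα : -1 < α) {x : ℝ} (hx : 0 < x) :
    ∫ t in Ioi (0:ℝ), t ^ α * Real.exp (-x * t) = Real.Gamma (α+1) / x ^ (α+1) := by
  have h := Real.integral_rpow_mul_exp_neg_mul_Ioi (a := α + 1) (r := x) (by linarith) hx
  rw [add_sub_cancel_right] at h
  simp only [neg_mul] at h ⊢
  rw [h, one_div, Real.inv_rpow hx.le, inv_mul_eq_div]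

theorem watson_lemma_first_order
    (f : ℝ → ℝ) (K c a₀ α : ℝ) (hK : 0 < K) (hc : 0 < c) (hα : -1 < α)
    (hcont : ContinuousOn f (Ici 0))
    (hbound : ∀ t ≥ (0:ℝ), |f t| ≤ K * Real.exp (c * t))
    (hasymp : (fun t : ℝ => f t - a₀ * t ^ α) =o[nhdsWithin 0 (Ioi 0)] (fun t : ℝ => t ^ α)) :
    (fun x : ℝ =>
        (∫ t in Ioi (0:ℝ), f t * Real.exp (-x*t)) - a₀ * Real.Gamma (α+1) / x ^ (α+1))
      =o[atTop] (fun x : ℝ => 1 / x ^ (α+1)) := by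
  have hα1 : (0:ℝ) < α + 1 := by linarith
  have hΓ : 0 < Real.Gamma (α+1) := Real.Gamma_pos_of_pos hα1
  set g : ℝ → ℝ := fun t => f t - a₀ * t ^ α with hg
  -- integrability of f * exp(-x t)
  have hmeas : ∀ x : ℝ, AEStronglyMeasurable (fun t => f t * Real.exp (-x*t))
      (volume.restrict (Ioi (0:ℝ))) := by
    intro x
    refine ContinuousOn.aestronglyMeasurable ?_ measurableSet_Ioi
    exact (hcont.mono Ioi_subset_Ici_self).mul
      ((Real.continuous_exp.comp (continuous_const.mul continuous_id)).continuousOn)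
  have hint_f : ∀ {x : ℝ}, c < x →
      IntegrableOn (fun t => f t * Real.exp (-x*t)) (Ioi 0) := by
    intro x hx
    refine Integrable.mono'
      ((exp_neg_integrableOn_Ioi 0 (show (0:ℝ) < x - c by linarith)).const_mul K)
      (hmeas x) ?_
    rw [ae_restrict_iff' measurableSet_Ioi]
    refine ae_of_all _ fun t ht => ?_
    have h1 : |f t| ≤ K * Real.exp (c * t) := hbound t (le_of_lt ht)
    have h2 : Real.exp (c*t) * Real.exp (-x*t) = Real.exp (-(x-c)*t) := by
      rw [← Real.exp_add]; ring_nf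
    calc ‖f t * Real.exp (-x*t)‖ = |f t| * Real.exp (-x*t) := by
          rw [norm_mul, Real.norm_eq_abs, Real.norm_eq_abs, abs_of_pos (Real.exp_pos _)]
      _ ≤ (K * Real.exp (c*t)) * Real.exp (-x*t) :=
          mul_le_mul_of_nonneg_right h1 (Real.exp_pos _).le
      _ = K * Real.exp (-(x-c)*t) := by rw [mul_assoc, h2]
  have hint_g : ∀ {x : ℝ}, c < x →
      IntegrableOn (fun t => g t * Real.exp (-x*t)) (Ioi 0) := by
    intro x hx
    have hx0 : (0:ℝ) < x := hc.trans hx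
    have : (fun t : ℝ => g t * Real.exp (-x*t))
        = fun t => f t * Real.exp (-x*t) - a₀ * (t ^ α * Real.exp (-x*t)) := by
      funext t; simp only [hg]; ring
    rw [this]
    exact (hint_f hx).sub ((aux_int_rpow hα hx0).const_mul a₀)
  -- reduce to the integral of g
  have heq : (fun x : ℝ => ∫ t in Ioi (0:ℝ), g t * Real.exp (-x*t))
      =ᶠ[atTop] (fun x : ℝ =>
        (∫ t in Ioi (0:ℝ), f t * Real.exp (-x*t)) - a₀ * Real.Gamma (α+1) / x ^ (α+1)) := by
    filter_upwards [eventually_gt_atTop c] with x hx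
    have hx0 : (0:ℝ) < x := hc.trans hx
    have h1 : (fun t : ℝ => g t * Real.exp (-x*t))
        = fun t => f t * Real.exp (-x*t) - a₀ * (t ^ α * Real.exp (-x*t)) := by
      funext t; simp only [hg]; ring
    rw [h1, integral_sub (hint_f hx) ((aux_int_rpow hα hx0).const_mul a₀),
      integral_const_mul, aux_int_val hα hx0, mul_div_assoc]
  refine IsLittleO.congr' ?_ heq EventuallyEq.rfl
  -- main estimate
  rw [isLittleO_iff]
  intro ε hε
  set ε₁ : ℝ := ε / (2 * Real.Gamma (α+1)) with hε₁def
  have hε₁ : 0 < ε₁ := by positivity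
  -- small-t bound
  obtain ⟨δ₀, hδ₀, hsmall₀⟩ :
      ∃ δ₀ > 0, ∀ t ∈ Ioo (0:ℝ) δ₀, ‖f t - a₀ * t ^ α‖ ≤ ε₁ * ‖t ^ α‖ := by
    have h := hasymp.def hε₁
    rw [(nhdsGT_basis (0:ℝ)).eventually_iff] at h
    obtain ⟨δ₀, hδ₀, h⟩ := h
    exact ⟨δ₀, hδ₀, fun t ht => h ht⟩
  set δ : ℝ := δ₀ / 2 with hδdef
  have hδ : 0 < δ := by positivity
  have hsmall : ∀ t ∈ Ioc (0:ℝ) δ, |g t| ≤ ε₁ * t ^ α := by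
    intro t ht
    have ht' : t ∈ Ioo (0:ℝ) δ₀ := ⟨ht.1, lt_of_le_of_lt ht.2 (by simp [hδdef]; linarith)⟩
    have := hsmall₀ t ht'
    rwa [Real.norm_eq_abs, Real.norm_eq_abs, abs_of_nonneg (Real.rpow_nonneg ht.1.le α)] at this
  -- tail is exponentially small
  have htail_exp : (fun x : ℝ => Real.exp (-x*δ)) =o[atTop] (fun x : ℝ => 1 / x ^ (α+1)) := by
    rw [isLittleO_iff_tendsto']
    · have h := tendsto_rpow_mul_exp_neg_mul_atTop_nhds_zero (α+1) δ hδ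
      refine h.congr' ?_
      filter_upwards [eventually_gt_atTop (0:ℝ)] with x hx
      rw [one_div, div_eq_mul_inv, inv_inv, show -x*δ = -δ*x by ring, mul_comm]
    · filter_upwards [eventually_gt_atTop (0:ℝ)] with x hx h
      exact absurd h (by positivity)
  have hCint : IntegrableOn (fun t : ℝ => |g t| * Real.exp (-(c+1)*t)) (Ioi δ) := by
    have h := ((hint_g (show c < c+1 by linarith)).mono_set
      (Ioi_subset_Ioi hδ.le)).norm
    refine IntegrableOn.congr_fun h (fun t _ => ?_) measurableSet_Ioi
    rw [norm_mul, Real.norm_eq_abs, Real.norm_eq_abs, abs_of_pos (Real.exp_pos _)]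
  set C : ℝ := ∫ t in Ioi δ, |g t| * Real.exp (-(c+1)*t) with hCdef
  have hC0 : 0 ≤ C := by
    refine setIntegral_nonneg measurableSet_Ioi fun t _ => ?_
    positivity
  have htail_bigO : (fun x : ℝ => ∫ t in Ioi δ, g t * Real.exp (-x*t))
      =O[atTop] (fun x : ℝ => Real.exp (-x*δ)) := by
    refine IsBigO.of_bound (C * Real.exp ((c+1)*δ)) ?_
    filter_upwards [eventually_ge_atTop (c+1)] with x hx
    have hx0 : (0:ℝ) < x := by linarith
    have hintx : IntegrableOn (fun t : ℝ => |g t| * Real.exp (-x*t)) (Ioi δ) := by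
      have h := ((hint_g (show c < x by linarith)).mono_set
        (Ioi_subset_Ioi hδ.le)).norm
      refine IntegrableOn.congr_fun h (fun t _ => ?_) measurableSet_Ioi
      rw [norm_mul, Real.norm_eq_abs, Real.norm_eq_abs, abs_of_pos (Real.exp_pos _)]
    have key : ∀ t ∈ Ioi δ,
        |g t| * Real.exp (-x*t) ≤ (|g t| * Real.exp (-(c+1)*t)) * Real.exp (-(x-(c+1))*δ) := by
      intro t ht
      have h1 : Real.exp (-x*t) = Real.exp (-(c+1)*t) * Real.exp (-(x-(c+1))*t) := by
        rw [← Real.exp_add]; ring_nf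
      have h2 : Real.exp (-(x-(c+1))*t) ≤ Real.exp (-(x-(c+1))*δ) := by
        apply Real.exp_le_exp.2
        have : (0:ℝ) ≤ x - (c+1) := by linarith
        nlinarith [mem_Ioi.1 ht]
      rw [h1, ← mul_assoc]
      exact mul_le_mul_of_nonneg_left h2 (by positivity)
    calc ‖∫ t in Ioi δ, g t * Real.exp (-x*t)‖
        ≤ ∫ t in Ioi δ, ‖g t * Real.exp (-x*t)‖ := norm_integral_le_integral_norm _
      _ = ∫ t in Ioi δ, |g t| * Real.exp (-x*t) := by
          refine setIntegral_congr_fun measurableSet_Ioi fun t _ => ?_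
          rw [norm_mul, Real.norm_eq_abs, Real.norm_eq_abs, abs_of_pos (Real.exp_pos _)]
      _ ≤ ∫ t in Ioi δ, (|g t| * Real.exp (-(c+1)*t)) * Real.exp (-(x-(c+1))*δ) := by
          refine setIntegral_mono_on hintx (hCint.mul_const _) measurableSet_Ioi key
      _ = C * Real.exp (-(x-(c+1))*δ) := by rw [integral_mul_const]
      _ = (C * Real.exp ((c+1)*δ)) * Real.exp (-x*δ) := by
          rw [mul_assoc, ← Real.exp_add]; ring_nf
      _ ≤ (C * Real.exp ((c+1)*δ)) * ‖Real.exp (-x*δ)‖ := by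
          rw [Real.norm_eq_abs, abs_of_pos (Real.exp_pos _)]
  have htail := (htail_bigO.trans_isLittleO htail_exp).def (half_pos hε)
  filter_upwards [eventually_gt_atTop c, eventually_gt_atTop 0, htail] with x hxc hx0 htailx
  have hxpow : (0:ℝ) < x ^ (α+1) := Real.rpow_pos_of_pos hx0 _
  -- split the integral
  have hsplit : (∫ t in Ioi (0:ℝ), g t * Real.exp (-x*t))
      = (∫ t in Ioc 0 δ, g t * Real.exp (-x*t)) + ∫ t in Ioi δ, g t * Real.exp (-x*t) := by
    rw [← setIntegral_union (Ioc_disjoint_Ioi le_rfl) measurableSet_Ioi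
      ((hint_g hxc).mono_set Ioc_subset_Ioi_self) ((hint_g hxc).mono_set (Ioi_subset_Ioi hδ.le)),
      Ioc_union_Ioi_eq_Ioi hδ.le]
  -- near piece
  have hnear : ‖∫ t in Ioc (0:ℝ) δ, g t * Real.exp (-x*t)‖ ≤ (ε/2) * (1 / x ^ (α+1)) := by
    have hrint : IntegrableOn (fun t : ℝ => t ^ α * Real.exp (-x*t)) (Ioi 0) :=
      aux_int_rpow hα hx0
    have hrnn : 0 ≤ᵐ[volume.restrict (Ioi (0:ℝ))] fun t : ℝ => t ^ α * Real.exp (-x*t) := by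
      rw [Filter.EventuallyLE, ae_restrict_iff' measurableSet_Ioi]
      refine ae_of_all _ fun t ht => ?_
      have ht0 : (0:ℝ) < t := ht
      positivity
    calc ‖∫ t in Ioc (0:ℝ) δ, g t * Real.exp (-x*t)‖
        ≤ ∫ t in Ioc (0:ℝ) δ, ‖g t * Real.exp (-x*t)‖ := norm_integral_le_integral_norm _
      _ ≤ ∫ t in Ioc (0:ℝ) δ, ε₁ * (t ^ α * Real.exp (-x*t)) := by
          refine setIntegral_mono_on
            (((hint_g hxc).mono_set Ioc_subset_Ioi_self).norm)
            ((hrint.mono_set Ioc_subset_Ioi_self).const_mul ε₁)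
            measurableSet_Ioc fun t ht => ?_
          rw [norm_mul, Real.norm_eq_abs, Real.norm_eq_abs, abs_of_pos (Real.exp_pos _),
            ← mul_assoc]
          exact mul_le_mul_of_nonneg_right (hsmall t ht) (Real.exp_pos _).le
      _ = ε₁ * ∫ t in Ioc (0:ℝ) δ, t ^ α * Real.exp (-x*t) := by rw [integral_const_mul]
      _ ≤ ε₁ * ∫ t in Ioi (0:ℝ), t ^ α * Real.exp (-x*t) := by
          refine mul_le_mul_of_nonneg_left ?_ hε₁.le
          exact setIntegral_mono_set hrint hrnn (HasSubset.Subset.eventuallyLE Ioc_subset_Ioi_self)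
      _ = ε₁ * (Real.Gamma (α+1) / x ^ (α+1)) := by rw [aux_int_val hα hx0]
      _ = (ε/2) * (1 / x ^ (α+1)) := by
          rw [hε₁def]; field_simp
  rw [hsplit]
  have habs : ‖(1:ℝ) / x ^ (α+1)‖ = 1 / x ^ (α+1) := by
    rw [Real.norm_eq_abs, abs_of_pos (by positivity)]
  rw [habs] at htailx ⊢
  calc ‖(∫ t in Ioc (0:ℝ) δ, g t * Real.exp (-x*t)) + ∫ t in Ioi δ, g t * Real.exp (-x*t)‖
      ≤ ‖∫ t in Ioc (0:ℝ) δ, g t * Real.exp (-x*t)‖ + ‖∫ t in Ioi δ, g t * Real.exp (-x*t)‖ :=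
        norm_add_le _ _
    _ ≤ (ε/2) * (1 / x ^ (α+1)) + (ε/2) * (1 / x ^ (α+1)) := add_le_add hnear htailx
    _ = ε * (1 / x ^ (α+1)) := by ring
end
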